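/- arXiv:2303.16705 — 8 statements merged into one kernel-verified Lean document; each statement's English description precedes it below -/
import Mathlib

section
/- Let a ∈ ℚ with a ≠ 0 and a ≠ −1. Let A and B be the 4×4 rational matrices A = [[1,0,a,0],[0,a,0,1],[a,0,1,0],[0,1,0,a]] and B = [[1,a,0,0],[a,1,0,0],[0,0,a,1],[0,0,1,a]]. Then A·B·A = (a + a²)·M(z), where z = (1 + a³)/(a + a²) (which also equals a + a⁻¹ − 1). -/
def Mmat (t : ℚ) : Matrix (Fin 4) (Fin 4) ℚ :=
  !![t, 1, 1, 1; 1, 1, t, 1; 1, t, 1, 1; 1, 1, 1, t]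

section CommRing

variable {R : Type*} [CommRing R]

def matA (a : R) : Matrix (Fin 4) (Fin 4) R :=
  !![1, 0, a, 0; 0, a, 0, 1; a, 0, 1, 0; 0, 1, 0, a]

def matB (a : R) : Matrix (Fin 4) (Fin 4) R :=
  !![1, a, 0, 0; a, 1, 0, 0; 0, 0, a, 1; 0, 0, 1, a]

theorem matA_mul_matB_mul_matA (a : R) :
    matA a * matB a * matA a =
      !![1 + a ^ 3, a + a ^ 2, a + a ^ 2, a + a ^ 2;
        a + a ^ 2, a + a ^ 2, 1 + a ^ 3, a + a ^ 2;
        a + a ^ 2, 1 + a ^ 3, a + a ^ 2, a + a ^ 2;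
        a + a ^ 2, a + a ^ 2, a + a ^ 2, 1 + a ^ 3] := by
  ext i j
  fin_cases i <;> fin_cases j <;>
    simp [matA, matB, Matrix.mul_apply, Fin.sum_univ_four] <;> ring

end CommRing

theorem smul_Mmat_of_mul_eq {s z c : ℚ} (h : s * z = c) :
    s • Mmat z = !![c, s, s, s; s, s, c, s; s, c, s, s; s, s, s, c] := by
  ext i j
  fin_cases i <;> fin_cases j <;> simp [Mmat, h]

theorem one_add_pow_three_div_add_sq {K : Type*} [Field K] {a : K} (ha : a ≠ 0)
    (ha' : 1 + a ≠ 0) : (1 + a ^ 3) / (a + a ^ 2) = a + a⁻¹ - 1 := by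
  field_simp
  ring

/-- `A·B·A = (a+a²)·M(z)` with `z = (1+a³)/(a+a²) = a + a⁻¹ - 1`. -/
theorem stmt7 (a : ℚ) (ha : a ≠ 0) (ha' : a ≠ -1) :
    ((!![1, 0, a, 0; 0, a, 0, 1; a, 0, 1, 0; 0, 1, 0, a] : Matrix (Fin 4) (Fin 4) ℚ) *
     (!![1, a, 0, 0; a, 1, 0, 0; 0, 0, a, 1; 0, 0, 1, a] : Matrix (Fin 4) (Fin 4) ℚ) *
     (!![1, 0, a, 0; 0, a, 0, 1; a, 0, 1, 0; 0, 1, 0, a] : Matrix (Fin 4) (Fin 4) ℚ))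
      = (a + a ^ 2) • Mmat ((1 + a ^ 3) / (a + a ^ 2)) ∧
    (1 + a ^ 3) / (a + a ^ 2) = a + a⁻¹ - 1 := by
  have ha₁ : 1 + a ≠ 0 := fun h => ha' (by linear_combination h)
  have hs : a + a ^ 2 ≠ 0 := by
    rw [show a + a ^ 2 = a * (1 + a) by ring]
    exact mul_ne_zero ha ha₁
  refine ⟨?_, one_add_pow_three_div_add_sq ha ha₁⟩
  rw [smul_Mmat_of_mul_eq (mul_div_cancel₀ _ hs)]
  exact matA_mul_matB_mul_matA a
end

section
/- Let z ∈ ℝ with z > 1, and let (x_s)_{s≥0} be the sequence defined by x₀ = z and x_{s+1} = (6 + 6z + 3x_s + z²x_s)/(7 + 4z + z² + 2x_s + 2z·x_s). Then for every s ≥ 0 one has x_s > 1 and x_{s+1} < x_s; in particular the denominator 7 + 4z + z² + 2x_s + 2z·x_s is positive for every s. -/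
/-!
Writing `N = 6 + 6z + 3x + z²x` and `D = 7 + 4z + z² + 2x + 2zx` for the numerator and
denominator of the recursion, one has the factorisations
`N - D = (z - 1)² (x - 1)` and `x D - N = 2 (1 + z) (x - 1) (x + 3)`.
For `z > 1` the first shows that `x > 1` is preserved, the second that the sequence
then strictly decreases.
-/

section Recursion

variable {z x : ℝ}

lemma recursion_denom_pos (hz : -1 ≤ z) (hx : 0 ≤ x) :
    0 < 7 + 4 * z + z ^ 2 + 2 * x + 2 * z * x := by
  calc 0 < (z + 2) ^ 2 + 3 + 2 * (1 + z) * x := by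
        have : 0 ≤ 1 + z := by linarith
        positivity
    _ = 7 + 4 * z + z ^ 2 + 2 * x + 2 * z * x := by ring

lemma one_lt_recursion (hz : -1 ≤ z) (hz₁ : z ≠ 1) (hx : 1 < x) :
    1 < (6 + 6 * z + 3 * x + z ^ 2 * x) / (7 + 4 * z + z ^ 2 + 2 * x + 2 * z * x) := by
  rw [one_lt_div (recursion_denom_pos hz (by linarith)), ← sub_pos]
  calc 0 < (z - 1) ^ 2 * (x - 1) :=
        mul_pos (sq_pos_of_ne_zero (sub_ne_zero.mpr hz₁)) (sub_pos.mpr hx)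
    _ = 6 + 6 * z + 3 * x + z ^ 2 * x - (7 + 4 * z + z ^ 2 + 2 * x + 2 * z * x) := by ring

lemma recursion_lt_self (hz : -1 < z) (hx : 1 < x) :
    (6 + 6 * z + 3 * x + z ^ 2 * x) / (7 + 4 * z + z ^ 2 + 2 * x + 2 * z * x) < x := by
  rw [div_lt_iff₀ (recursion_denom_pos hz.le (by linarith)), ← sub_pos]
  calc 0 < 2 * (1 + z) * (x - 1) * (x + 3) := by
        have : 0 < 1 + z := by linarith
        have : 0 < x - 1 := by linarith
        positivity
    _ = x * (7 + 4 * z + z ^ 2 + 2 * x + 2 * z * x) - (6 + 6 * z + 3 * x + z ^ 2 * x) := by ring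

end Recursion

/-- for `z > 1`, the sequence `(x_s)` satisfies `x_s > 1` and is
strictly decreasing; moreover all denominators are positive. -/
theorem stmt9 (z : ℝ) (hz : 1 < z) (x : ℕ → ℝ)
    (hx0 : x 0 = z)
    (hxs : ∀ s : ℕ, x (s + 1) =
      (6 + 6 * z + 3 * x s + z ^ 2 * x s) /
        (7 + 4 * z + z ^ 2 + 2 * x s + 2 * z * x s)) :
    (∀ s : ℕ, 1 < x s ∧ x (s + 1) < x s) ∧
    (∀ s : ℕ, 0 < 7 + 4 * z + z ^ 2 + 2 * x s + 2 * z * x s) := by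
  have one_lt : ∀ s, 1 < x s := by
    intro s
    induction s with
    | zero => rwa [hx0]
    | succ s ih => rw [hxs s]; exact one_lt_recursion (by linarith) hz.ne' ih
  refine ⟨fun s => ⟨one_lt s, ?_⟩, fun s => ?_⟩
  · rw [hxs s]
    exact recursion_lt_self (by linarith) (one_lt s)
  · exact recursion_denom_pos (by linarith) (zero_le_one.trans (one_lt s).le)
end

section
/- Let z ∈ ℝ with z < −3, and let (x_s)_{s≥0} be the sequence defined by x₀ = z and x_{s+1} = (6 + 6z + 3x_s + z²x_s)/(7 + 4z + z² + 2x_s + 2z·x_s). Then for every s ≥ 0 one has x_s < −3 and x_{s+1} > x_s; in particular the denominator 7 + 4z + z² + 2x_s + 2z·x_s is positive for every s. -/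
/-!
Write the recursion as `x ↦ N(x) / D(x)` with
`N(x) = 6 + 6z + 3x + z²x` and `D(x) = 7 + 4z + z² + 2x + 2zx = (z + 2)² + 3 + 2x(1 + z)`.
For `z, x ≤ -1` the denominator is at least `3`, and two factorisations do the rest:
`N + 3D = (z + 3)²(x + 3)` keeps the sequence below `-3`, and
`N - xD = 2(1 + z)(x + 3)(1 - x)` is positive there, so the sequence increases.
-/

namespace RationalRecurrence

def numer (z x : ℝ) : ℝ := 6 + 6 * z + 3 * x + z ^ 2 * x

def denom (z x : ℝ) : ℝ := 7 + 4 * z + z ^ 2 + 2 * x + 2 * z * x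

noncomputable def next (z x : ℝ) : ℝ := numer z x / denom z x

theorem denom_pos {z x : ℝ} (hz : z ≤ -1) (hx : x ≤ 0) : 0 < denom z x := by
  have : 0 ≤ x * (1 + z) := mul_nonneg_of_nonpos_of_nonpos hx (by linarith)
  unfold denom
  nlinarith [sq_nonneg (z + 2)]

theorem numer_add_three_mul_denom (z x : ℝ) :
    numer z x + 3 * denom z x = (z + 3) ^ 2 * (x + 3) := by
  unfold numer denom; ring

theorem numer_sub_mul_denom (z x : ℝ) :
    numer z x - x * denom z x = 2 * (1 + z) * (x + 3) * (1 - x) := by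
  unfold numer denom; ring

theorem next_lt_neg_three {z x : ℝ} (hz : z ≤ -1) (hz3 : z ≠ -3) (hx : x < -3) :
    next z x < -3 := by
  have hD := denom_pos hz (by linarith : x ≤ 0)
  have hsq : 0 < (z + 3) ^ 2 := by
    have : z + 3 ≠ 0 := fun h => hz3 (by linarith)
    positivity
  have hN : numer z x + 3 * denom z x < 0 := by
    rw [numer_add_three_mul_denom]
    exact mul_neg_of_pos_of_neg hsq (by linarith)
  rw [next, div_lt_iff₀ hD]
  linarith

theorem lt_next {z x : ℝ} (hz : z < -1) (hx : x < -3) : x < next z x := by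
  have hD := denom_pos hz.le (by linarith : x ≤ 0)
  have hN : 0 < numer z x - x * denom z x := by
    rw [numer_sub_mul_denom]
    exact mul_pos (mul_pos_of_neg_of_neg (by linarith) (by linarith)) (by linarith)
  rw [next, lt_div_iff₀ hD]
  linarith

end RationalRecurrence

open RationalRecurrence in
/-- for `z < -3`, the sequence `(x_s)` satisfies `x_s < -3` and is
strictly increasing; moreover all denominators are positive. -/
theorem stmt10 (z : ℝ) (hz : z < -3) (x : ℕ → ℝ)
    (hx0 : x 0 = z)
    (hxs : ∀ s : ℕ, x (s + 1) =
      (6 + 6 * z + 3 * x s + z ^ 2 * x s) /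
        (7 + 4 * z + z ^ 2 + 2 * x s + 2 * z * x s)) :
    (∀ s : ℕ, x s < -3 ∧ x s < x (s + 1)) ∧
    (∀ s : ℕ, 0 < 7 + 4 * z + z ^ 2 + 2 * x s + 2 * z * x s) := by
  have hx : ∀ s, x s < -3 := by
    intro s
    induction s with
    | zero => rwa [hx0]
    | succ s ih =>
      rw [hxs s]
      exact next_lt_neg_three (by linarith) hz.ne ih
  refine ⟨fun s => ⟨hx s, ?_⟩, fun s => denom_pos (by linarith) (by linarith [hx s])⟩
  rw [hxs s]
  exact lt_next (by linarith) (hx s)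
end

section
/- Let a, b, c ∈ ℚ with c ≠ ab, and let λ, μ ∈ ℂ be the eigenvalues of the matrix [[1,b],[a,c]], i.e. complex numbers satisfying λ + μ = 1 + c and λ·μ = c − ab (so μ ≠ 0). If λ/μ is a root of unity, i.e. (λ/μ)ⁿ = 1 for some integer n ≥ 1, then at least one of the following holds: c + 1 = 0, or ab + c² + c + 1 = 0, or 2ab + c² + 1 = 0, or 3ab + c² − c + 1 = 0, or 4ab + c² − 2c + 1 = 0. -/
/-!
If `r = λ / μ` is a root of unity, then `r + r⁻¹` is an algebraic integer of absolute value at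
most `2`. It also equals `(λ + μ)² / (λ μ) - 2 = (1 + c)² / (c - ab) - 2`, which is rational, hence
an integer `k - 2` with `0 ≤ k ≤ 4`. The five cases `(1 + c)² = k (c - ab)` are the five equations.
-/

theorem isIntegral_add_inv_of_pow_eq_one {K : Type*} [Field K] {r : K} {n : ℕ} (hn : n ≠ 0)
    (h : r ^ n = 1) : IsIntegral ℤ (r + r⁻¹) := by
  have hr : IsIntegral ℤ r :=
    ⟨Polynomial.X ^ n - Polynomial.C 1, Polynomial.monic_X_pow_sub_C 1 hn, by simp [h]⟩
  have hinv : r⁻¹ = r ^ (n - 1) := inv_eq_of_mul_eq_one_right <| by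
    rw [← pow_succ', Nat.sub_add_cancel (Nat.one_le_iff_ne_zero.2 hn), h]
  exact hr.add (hinv ▸ hr.pow _)

theorem Complex.norm_add_inv_le_two_of_pow_eq_one {r : ℂ} {n : ℕ} (hn : n ≠ 0) (h : r ^ n = 1) :
    ‖r + r⁻¹‖ ≤ 2 := by
  have hr : ‖r‖ = 1 := Complex.norm_eq_one_of_pow_eq_one h hn
  calc ‖r + r⁻¹‖ ≤ ‖r‖ + ‖r⁻¹‖ := norm_add_le _ _
    _ = 2 := by rw [norm_inv, hr]; norm_num

theorem Rat.exists_int_eq_of_isIntegral_cast {K : Type*} [Field K] [CharZero K] {q : ℚ}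
    (h : IsIntegral ℤ (q : K)) : ∃ m : ℤ, q = m := by
  have hq : IsIntegral ℤ q :=
    IsIntegral.tower_bot (algebraMap ℚ K).injective (by simpa using h)
  obtain ⟨m, hm⟩ := IsIntegrallyClosed.isIntegral_iff.mp hq
  exact ⟨m, by simpa using hm.symm⟩

theorem exists_int_abs_le_two_eq_add_inv_of_pow_eq_one {r : ℂ} {n : ℕ} (hn : n ≠ 0) (h : r ^ n = 1)
    {q : ℚ} (hq : (q : ℂ) = r + r⁻¹) : ∃ m : ℤ, q = m ∧ |m| ≤ 2 := by
  obtain ⟨m, rfl⟩ := Rat.exists_int_eq_of_isIntegral_cast (K := ℂ)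
    (hq ▸ isIntegral_add_inv_of_pow_eq_one hn h)
  refine ⟨m, rfl, ?_⟩
  have hnorm : ‖((m : ℚ) : ℂ)‖ ≤ 2 := hq ▸ Complex.norm_add_inv_le_two_of_pow_eq_one hn h
  rw [Rat.cast_intCast, Complex.norm_intCast] at hnorm
  exact_mod_cast hnorm

theorem div_add_inv_div_eq {K : Type*} [Field K] {x y : K} (hx : x ≠ 0) (hy : y ≠ 0) :
    x / y + (x / y)⁻¹ = (x + y) ^ 2 / (x * y) - 2 := by
  field_simp
  ring

theorem exists_sq_eq_mul_of_div_pow_eq_one {x y : ℂ} {s p : ℚ} (hp : p ≠ 0)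
    (hsum : x + y = s) (hprod : x * y = p) {n : ℕ} (hn : n ≠ 0) (h : (x / y) ^ n = 1) :
    ∃ k : ℤ, 0 ≤ k ∧ k ≤ 4 ∧ s ^ 2 = k * p := by
  have hxy : x * y ≠ 0 := by rw [hprod]; exact_mod_cast hp
  have hq : ((s ^ 2 / p - 2 : ℚ) : ℂ) = x / y + (x / y)⁻¹ := by
    push_cast
    rw [div_add_inv_div_eq (left_ne_zero_of_mul hxy) (right_ne_zero_of_mul hxy), hsum, hprod]
  obtain ⟨m, hm, hm2⟩ := exists_int_abs_le_two_eq_add_inv_of_pow_eq_one hn h hq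
  refine ⟨m + 2, by linarith [neg_abs_le m], by linarith [le_abs_self m], ?_⟩
  rw [sub_eq_iff_eq_add, div_eq_iff hp] at hm
  rw [hm]
  push_cast
  ring

/-- if the ratio of the eigenvalues of `[[1,b],[a,c]]` (with
`c ≠ ab`) is a root of unity, then one of the five listed rational equations
holds. -/
theorem stmt13 (a b c : ℚ) (hc : c ≠ a * b) (lam mu : ℂ)
    (hsum : lam + mu = 1 + (c : ℂ))
    (hprod : lam * mu = (c : ℂ) - (a : ℂ) * (b : ℂ))
    (hroot : ∃ n : ℕ, 1 ≤ n ∧ (lam / mu) ^ n = 1) :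
    c + 1 = 0 ∨
    a * b + c ^ 2 + c + 1 = 0 ∨
    2 * a * b + c ^ 2 + 1 = 0 ∨
    3 * a * b + c ^ 2 - c + 1 = 0 ∨
    4 * a * b + c ^ 2 - 2 * c + 1 = 0 := by
  obtain ⟨n, hn, hpow⟩ := hroot
  obtain ⟨k, hk0, hk4, hk⟩ := exists_sq_eq_mul_of_div_pow_eq_one (s := 1 + c) (p := c - a * b)
    (sub_ne_zero.mpr hc) (by push_cast; exact hsum) (by push_cast; exact hprod)
    (Nat.one_le_iff_ne_zero.mp hn) hpow
  interval_cases k <;> push_cast at hk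
  · exact .inl <| by simpa [add_comm] using hk
  · exact .inr <| .inl <| by linear_combination hk
  · exact .inr <| .inr <| .inl <| by linear_combination hk
  · exact .inr <| .inr <| .inr <| .inl <| by linear_combination hk
  · exact .inr <| .inr <| .inr <| .inr <| by linear_combination hk
end

section
/- Let a, b, c ∈ ℚ and set w = 1 + ab, a' = a + b², b' = a² + bc, c' = ab + c². Suppose w·c' ≠ a'·b', and let λ', μ' ∈ ℂ be the eigenvalues of the matrix [[w,b'],[a',c']], i.e. complex numbers satisfying λ' + μ' = w + c' and λ'·μ' = w·c' − a'·b' (so μ' ≠ 0). Set A = w + c' and B = (c' − w)² + 4a'b'. If λ'/μ' is a root of unity, i.e. (λ'/μ')ⁿ = 1 for some integer n ≥ 1, then at least one of the following holds: A = 0, or B = 0, or A² + B = 0, or A² + 3B = 0, or 3A² + B = 0. -/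
/-!
If `r = λ'/μ'` is a root of unity then `r + r⁻¹` is an algebraic integer of absolute value at
most `2`. On the other hand `r + r⁻¹ = A²/P - 2` with `P = λ'μ'` rational, so it is one of the
integers `-2, …, 2`. Since `B = A² - 4P` is the discriminant, each of these five values turns
`A² = (r + r⁻¹ + 2) P` into one of the five listed equations.
-/

lemma isIntegral_of_pow_eq_one {R A : Type*} [CommRing R] [Ring A] [Algebra R A] {x : A}
    {n : ℕ} (hn : n ≠ 0) (hx : x ^ n = 1) : IsIntegral R x :=
  .of_pow (Nat.pos_of_ne_zero hn) (hx ▸ isIntegral_one)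

lemma exists_int_add_inv_eq_of_pow_eq_one {r : ℂ} {n : ℕ} (hn : n ≠ 0) (hr : r ^ n = 1)
    {q : ℚ} (hq : r + r⁻¹ = q) : ∃ z : ℤ, |z| ≤ 2 ∧ r + r⁻¹ = z := by
  have hint : IsIntegral ℤ (r + r⁻¹) :=
    (isIntegral_of_pow_eq_one hn hr).add
      (isIntegral_of_pow_eq_one hn (by rw [inv_pow, hr, inv_one]))
  obtain ⟨z, hz⟩ := hint.exists_int_iff_exists_rat.mp ⟨q, hq⟩
  refine ⟨z, ?_, hz⟩
  have hnorm : ‖r + r⁻¹‖ ≤ 2 := calc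
    ‖r + r⁻¹‖ ≤ ‖r‖ + ‖r⁻¹‖ := norm_add_le _ _
    _ = 2 := by rw [norm_inv, Complex.norm_eq_one_of_pow_eq_one hr hn]; norm_num
  rw [hz, Complex.norm_intCast] at hnorm
  exact_mod_cast hnorm

lemma div_add_inv_div_eq_s14 {K : Type*} [Field K] {lam mu S P : K} (hsum : lam + mu = S)
    (hprod : lam * mu = P) (hP : P ≠ 0) : lam / mu + (lam / mu)⁻¹ = S ^ 2 / P - 2 := by
  have hlam : lam ≠ 0 := left_ne_zero_of_mul (hprod ▸ hP)
  have hmu : mu ≠ 0 := right_ne_zero_of_mul (hprod ▸ hP)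
  rw [← hsum, ← hprod]
  field_simp
  ring

lemma exists_int_sq_eq_mul_of_div_pow_eq_one {lam mu : ℂ} {S P : ℚ} (hsum : lam + mu = S)
    (hprod : lam * mu = P) (hP : P ≠ 0) {n : ℕ} (hn : n ≠ 0) (hr : (lam / mu) ^ n = 1) :
    ∃ z : ℤ, |z| ≤ 2 ∧ S ^ 2 = (z + 2) * P := by
  have hq : lam / mu + (lam / mu)⁻¹ = ((S ^ 2 / P - 2 : ℚ) : ℂ) := by
    rw [div_add_inv_div_eq_s14 hsum hprod (by exact_mod_cast hP)]
    push_cast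
    rfl
  obtain ⟨z, hz, hzq⟩ := exists_int_add_inv_eq_of_pow_eq_one hn hr hq
  refine ⟨z, hz, ?_⟩
  have hzq : (z : ℚ) = S ^ 2 / P - 2 := by exact_mod_cast hzq.symm.trans hq
  rw [hzq]
  field_simp
  ring

lemma eq_zero_or_of_sq_eq_int_add_two_mul {R : Type*} [CommRing R] [NoZeroDivisors R]
    {A B P : R} {z : ℤ} (hz : |z| ≤ 2) (hA : A ^ 2 = (z + 2) * P) (hB : B = A ^ 2 - 4 * P) :
    A = 0 ∨ B = 0 ∨ A ^ 2 + B = 0 ∨ A ^ 2 + 3 * B = 0 ∨ 3 * A ^ 2 + B = 0 := by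
  obtain ⟨hz₁, hz₂⟩ := abs_le.mp hz
  interval_cases z <;> push_cast at hA
  · exact Or.inl (pow_eq_zero_iff two_ne_zero |>.mp (by linear_combination hA))
  · exact Or.inr <| Or.inr <| Or.inr <| Or.inr <| by linear_combination 4 * hA + hB
  · exact Or.inr <| Or.inr <| Or.inl <| by linear_combination 2 * hA + hB
  · exact Or.inr <| Or.inr <| Or.inr <| Or.inl <| by linear_combination 4 * hA + 3 * hB
  · exact Or.inr <| Or.inl <| by linear_combination hA + hB

/-- with `w = 1+ab`, `a' = a+b²`, `b' = a²+bc`, `c' = ab+c²`,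
`A = w + c'` and `B = (c'-w)² + 4a'b'`, if the matrix `[[w,b'],[a',c']]` is
non-degenerate and the ratio of its eigenvalues is a root of unity, then one of
the five listed rational equations holds. -/
theorem stmt14 (a b c : ℚ)
    (hnd : (1 + a * b) * (a * b + c ^ 2) ≠ (a + b ^ 2) * (a ^ 2 + b * c))
    (lam mu : ℂ)
    (hsum : lam + mu = ((1 + a * b : ℚ) : ℂ) + ((a * b + c ^ 2 : ℚ) : ℂ))
    (hprod : lam * mu =
      ((1 + a * b : ℚ) : ℂ) * ((a * b + c ^ 2 : ℚ) : ℂ) -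
        ((a + b ^ 2 : ℚ) : ℂ) * ((a ^ 2 + b * c : ℚ) : ℂ))
    (hroot : ∃ n : ℕ, 1 ≤ n ∧ (lam / mu) ^ n = 1) :
    (1 + a * b) + (a * b + c ^ 2) = 0 ∨
    ((a * b + c ^ 2) - (1 + a * b)) ^ 2 + 4 * (a + b ^ 2) * (a ^ 2 + b * c) = 0 ∨
    ((1 + a * b) + (a * b + c ^ 2)) ^ 2 +
      (((a * b + c ^ 2) - (1 + a * b)) ^ 2 + 4 * (a + b ^ 2) * (a ^ 2 + b * c)) = 0 ∨
    ((1 + a * b) + (a * b + c ^ 2)) ^ 2 +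
      3 * (((a * b + c ^ 2) - (1 + a * b)) ^ 2 + 4 * (a + b ^ 2) * (a ^ 2 + b * c)) = 0 ∨
    3 * ((1 + a * b) + (a * b + c ^ 2)) ^ 2 +
      (((a * b + c ^ 2) - (1 + a * b)) ^ 2 + 4 * (a + b ^ 2) * (a ^ 2 + b * c)) = 0 := by
  obtain ⟨n, hn, hr⟩ := hroot
  obtain ⟨z, hz, hA⟩ := exists_int_sq_eq_mul_of_div_pow_eq_one
    (S := (1 + a * b) + (a * b + c ^ 2))
    (P := (1 + a * b) * (a * b + c ^ 2) - (a + b ^ 2) * (a ^ 2 + b * c))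
    (by push_cast at hsum ⊢; exact hsum) (by push_cast at hprod ⊢; exact hprod)
    (sub_ne_zero.mpr hnd) (by omega) hr
  exact eq_zero_or_of_sq_eq_int_add_two_mul hz hA (by ring)
end

section
/- Let a, b, c ∈ ℚ with a·b ≠ 0. Suppose a³ − b³ − ab(1−c) = 0 and (a⁴b + ab⁴)² = (a⁵ + b⁴)(b⁵ + a⁴c). Then (a² − b)·(a⁹ + a⁴b⁴ + a³b⁶ + b⁹) = 0. -/
-- Multiplying `h2` by `b` and using `h1` to replace `a * b * c` by `a * b - a ^ 3 + b ^ 3`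
-- eliminates `c`; the resulting polynomial identity in `a, b` is the goal.
theorem stmt17_general (a b c : ℚ)
    (h1 : a ^ 3 - b ^ 3 - a * b * (1 - c) = 0)
    (h2 : (a ^ 4 * b + a * b ^ 4) ^ 2 = (a ^ 5 + b ^ 4) * (b ^ 5 + a ^ 4 * c)) :
    (a ^ 2 - b) * (a ^ 9 + a ^ 4 * b ^ 4 + a ^ 3 * b ^ 6 + b ^ 9) = 0 := by
  linear_combination b * h2 + (a ^ 5 + b ^ 4) * a ^ 3 * h1

/-- if `ab ≠ 0`, `a³ - b³ - ab(1-c) = 0` and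
`(a⁴b + ab⁴)² = (a⁵ + b⁴)(b⁵ + a⁴c)`, then
`(a² - b)(a⁹ + a⁴b⁴ + a³b⁶ + b⁹) = 0`. -/
theorem stmt17 (a b c : ℚ) (hab : a * b ≠ 0)
    (h1 : a ^ 3 - b ^ 3 - a * b * (1 - c) = 0)
    (h2 : (a ^ 4 * b + a * b ^ 4) ^ 2 = (a ^ 5 + b ^ 4) * (b ^ 5 + a ^ 4 * c)) :
    (a ^ 2 - b) * (a ^ 9 + a ^ 4 * b ^ 4 + a ^ 3 * b ^ 6 + b ^ 9) = 0 :=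
  stmt17_general a b c h1 h2
end

section
/- Let a, b, c ∈ ℚ with a·b ≠ 0. Suppose a³ − b³ − ab(1−c) = 0 and a³ + ab + 2b³ = 0, and suppose in addition that at least one of the following holds: c = ab, or a + b² = 0, or a³ − b³c + ab(c² − 1) = 0. Then (a, b, c) = (−1, 1, −1) or (a, b, c) = (−1/3, −1/3, 1). -/
/-!
Subtracting the two equations gives `b (a c - 3 b² - 2 a) = 0`, so `a c = 3 b² + 2 a`.
Each of the three extra conditions then forces `a = -b²` or `c = 1`: for `c = a b` one gets
`2 (a + b²)² = b (a³ + a b + 2 b³) - a (a² b - 2 a - 3 b²) = 0`, and the third condition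
minus the first equation factors as `(1 - c) b (b² - a c)`. In either case the second equation
becomes a pure cube equation in `b` (`b³ = 1`, resp. `27 b³ = -1`), which has a unique
solution since cubing is injective on an ordered field.
-/

section

variable {K : Type*} [Field K] {a b c : K}

theorem mul_eq_three_mul_sq_add_two_mul (hb : b ≠ 0)
    (h1 : a ^ 3 - b ^ 3 - a * b * (1 - c) = 0) (h2 : a ^ 3 + a * b + 2 * b ^ 3 = 0) :
    a * c = 3 * b ^ 2 + 2 * a := by
  have h : b * (a * c - (3 * b ^ 2 + 2 * a)) = 0 := by linear_combination h1 - h2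
  exact sub_eq_zero.1 ((mul_eq_zero.1 h).resolve_left hb)

theorem add_sq_eq_zero_or_eq_one [CharZero K] (hb : b ≠ 0)
    (h1 : a ^ 3 - b ^ 3 - a * b * (1 - c) = 0) (h2 : a ^ 3 + a * b + 2 * b ^ 3 = 0)
    (hac : a * c = 3 * b ^ 2 + 2 * a)
    (h3 : c = a * b ∨ a + b ^ 2 = 0 ∨ a ^ 3 - b ^ 3 * c + a * b * (c ^ 2 - 1) = 0) :
    a + b ^ 2 = 0 ∨ c = 1 := by
  rcases h3 with rfl | hA | h3
  · left
    have hsq : 2 * (a + b ^ 2) ^ 2 = 0 := by linear_combination b * h2 - a * hac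
    simpa using hsq
  · exact Or.inl hA
  · have h : (1 - c) * (b * (b ^ 2 - a * c)) = 0 := by linear_combination h3 - h1
    rcases mul_eq_zero.1 h with hc | h
    · exact Or.inr (sub_eq_zero.1 hc).symm
    · left
      linear_combination -((mul_eq_zero.1 h).resolve_left hb + hac) / 2

end

section

variable {K : Type*} [Field K] [LinearOrder K] [IsStrictOrderedRing K] {a b c : K}

theorem eq_of_pow_three_mul_sub_eq_zero {r : K} (hb : b ≠ 0) (h : b ^ 3 * (b ^ 3 - r ^ 3) = 0) :
    b = r :=
  (Odd.pow_inj (by decide)).1 (sub_eq_zero.1 ((mul_eq_zero.1 h).resolve_left (pow_ne_zero 3 hb)))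

theorem eq_neg_one_of_add_sq_eq_zero (hb : b ≠ 0) (h2 : a ^ 3 + a * b + 2 * b ^ 3 = 0)
    (hac : a * c = 3 * b ^ 2 + 2 * a) (hA : a + b ^ 2 = 0) :
    a = -1 ∧ b = 1 ∧ c = -1 := by
  obtain rfl : a = -b ^ 2 := eq_neg_of_add_eq_zero_left hA
  obtain rfl : b = 1 := eq_of_pow_three_mul_sub_eq_zero hb (by linear_combination -h2)
  exact ⟨by norm_num, rfl, by linear_combination -hac⟩

theorem eq_neg_third_of_eq_one (hb : b ≠ 0) (h2 : a ^ 3 + a * b + 2 * b ^ 3 = 0)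
    (hac : a * c = 3 * b ^ 2 + 2 * a) (hc : c = 1) :
    a = -1 / 3 ∧ b = -1 / 3 := by
  subst hc
  obtain rfl : a = -3 * b ^ 2 := by linear_combination -hac
  obtain rfl : b = -1 / 3 := eq_of_pow_three_mul_sub_eq_zero hb (by linear_combination -h2 / 27)
  exact ⟨by norm_num, rfl⟩

end

/-- if `ab ≠ 0`, `a³ - b³ - ab(1-c) = 0`, `a³ + ab + 2b³ = 0`,
and in addition `c = ab` or `a + b² = 0` or `a³ - b³c + ab(c² - 1) = 0`, then
`(a,b,c) = (-1,1,-1)` or `(a,b,c) = (-1/3,-1/3,1)`. -/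
theorem stmt18 (a b c : ℚ) (hab : a * b ≠ 0)
    (h1 : a ^ 3 - b ^ 3 - a * b * (1 - c) = 0)
    (h2 : a ^ 3 + a * b + 2 * b ^ 3 = 0)
    (h3 : c = a * b ∨ a + b ^ 2 = 0 ∨
      a ^ 3 - b ^ 3 * c + a * b * (c ^ 2 - 1) = 0) :
    (a = -1 ∧ b = 1 ∧ c = -1) ∨ (a = -1/3 ∧ b = -1/3 ∧ c = 1) := by
  have hb : b ≠ 0 := right_ne_zero_of_mul hab
  have hac := mul_eq_three_mul_sq_add_two_mul hb h1 h2
  rcases add_sq_eq_zero_or_eq_one hb h1 h2 hac h3 with hA | hc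
  · exact Or.inl (eq_neg_one_of_add_sq_eq_zero hb h2 hac hA)
  · obtain ⟨ha, hb⟩ := eq_neg_third_of_eq_one hb h2 hac hc
    exact Or.inr ⟨ha, hb, hc⟩
end

section
/- Let a, b, c ∈ ℚ with a·b ≠ 0 and a + b² ≠ 0. Suppose a³ − b³ − ab(1−c) = 0 and a³ + ab + 2b³ = 0. Then 4(a + b²)(a² + bc) + (c² − 1)² ≠ 0. -/
/-!
Subtracting the two cubic relations gives `b (a c - 3 b² - 2 a) = 0`, so `a c = 3 b² + 2 a`.
With this, both `a² + b c` and `c² - 1` turn out to be multiples of `a + b²`: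
`a (a² + b c) = b (a + b²)` and `a² b (c² - 1) = -3 (a + b²)(a³ - b³)`. Hence
`a⁴ b² · D = (a + b²)² (9 a⁶ - 14 a³ b³ + 9 b⁶)` for the discriminant `D`, and the binary
quadratic form `9 x² - 14 x y + 9 y² = 7 (x - y)² + 2 x² + 2 y²` is positive definite.
-/

theorem discr_mul_pow_eq_sq_mul {R : Type*} [CommRing R] {a b c : R}
    (hc : a * c = 3 * b ^ 2 + 2 * a) (h2 : a ^ 3 + a * b + 2 * b ^ 3 = 0) :
    (4 * (a + b ^ 2) * (a ^ 2 + b * c) + (c ^ 2 - 1) ^ 2) * (a ^ 4 * b ^ 2) =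
      (a + b ^ 2) ^ 2 * (9 * (a ^ 3) ^ 2 - 14 * a ^ 3 * b ^ 3 + 9 * (b ^ 3) ^ 2) := by
  have hbc : a * (a ^ 2 + b * c) = b * (a + b ^ 2) := by
    linear_combination h2 + b * hc
  have hc2 : a ^ 2 * b * (c ^ 2 - 1) = -3 * (a + b ^ 2) * (a ^ 3 - b ^ 3) := by
    linear_combination b * (a * c + 3 * b ^ 2 + 2 * a) * hc + 3 * (a + b ^ 2) * h2
  linear_combination 4 * a ^ 3 * b ^ 2 * (a + b ^ 2) * hbc +
    (a ^ 2 * b * (c ^ 2 - 1) - 3 * (a + b ^ 2) * (a ^ 3 - b ^ 3)) * hc2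

theorem nine_sq_sub_fourteen_mul_add_nine_sq_pos {K : Type*} [Field K] [LinearOrder K]
    [IsStrictOrderedRing K] (x : K) {y : K} (hy : y ≠ 0) :
    0 < 9 * x ^ 2 - 14 * x * y + 9 * y ^ 2 :=
  calc (0 : K) < 7 * (x - y) ^ 2 + 2 * x ^ 2 + 2 * y ^ 2 := by positivity
    _ = 9 * x ^ 2 - 14 * x * y + 9 * y ^ 2 := by ring

/-- if `ab ≠ 0`, `a + b² ≠ 0`, `a³ - b³ - ab(1-c) = 0` and
`a³ + ab + 2b³ = 0`, then the discriminant `4(a+b²)(a²+bc) + (c²-1)²` is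
nonzero. -/
theorem stmt19 (a b c : ℚ) (hab : a * b ≠ 0) (hab2 : a + b ^ 2 ≠ 0)
    (h1 : a ^ 3 - b ^ 3 - a * b * (1 - c) = 0)
    (h2 : a ^ 3 + a * b + 2 * b ^ 3 = 0) :
    4 * (a + b ^ 2) * (a ^ 2 + b * c) + (c ^ 2 - 1) ^ 2 ≠ 0 := by
  have hb : b ≠ 0 := right_ne_zero_of_mul hab
  have hc : a * c = 3 * b ^ 2 + 2 * a :=
    sub_eq_zero.mp <| (mul_eq_zero.mp (by linear_combination h1 - h2)).resolve_left hb
  intro hD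
  have hsplit := discr_mul_pow_eq_sq_mul hc h2
  rw [hD, zero_mul] at hsplit
  exact mul_ne_zero (pow_ne_zero 2 hab2)
    (nine_sq_sub_fourteen_mul_add_nine_sq_pos (a ^ 3) (pow_ne_zero 3 hb)).ne' hsplit.symm
end
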